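/- Let M ∈ ℝ^{n×n} satisfy ρ(√γ M) < 1 for γ ∈ (0,1), Q = S + KᵀRK with S, R symmetric positive definite, K ∈ ℝ^{d×n}, and P = Σ_{i=0}^∞ γⁱ(Mⁱ)ᵀQMⁱ. If D is symmetric positive definite then Tr(DP) ≥ σ_min(D)σ_min(S)/(1 − γρ(M)²). -/

import Mathlib

open Matrix
open scoped BigOperators

/-- Spectral radius: maximum modulus of the (complex) eigenvalues. -/
noncomputable def specRad {n : ℕ} (Z : Matrix (Fin n) (Fin n) ℝ) : ℝ :=
  (spectralRadius ℂ (Z.map (Complex.ofReal))).toReal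

/-!
Put `A = √γ • M`, so that `γ ρ(M)² = ρ(A)²` and `P = ∑ (Aⁱ)ᵀ Q Aⁱ`; the series converges because
Gelfand's formula makes `‖Aⁱ‖` eventually smaller than `rⁱ` for any `r > ρ(A)`. Each term is then
bounded below in three steps: `Tr(D X) ≥ λ_min(D) Tr X` for `X ⪰ 0`;
`Tr((Aⁱ)ᵀ Q Aⁱ) ≥ λ_min(S) ‖Aⁱ‖_F²` since `Q - λ_min(S) = (S - λ_min(S)) + KᵀRK ⪰ 0`; and
`‖Aⁱ‖_F ≥ ρ(Aⁱ) ≥ ρ(A)ⁱ`, because applying a matrix to the column matrix of an eigenvector shows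
that the Frobenius norm dominates every eigenvalue. Summing the geometric series
`∑ (ρ(A)²)ⁱ = 1 / (1 - γ ρ(M)²)` gives the bound.
-/

open Filter
open scoped NNReal ENNReal Pointwise

theorem spectrum.spectralRadius_smul {𝕜 A : Type*} [NormedField 𝕜] [Ring A] [Algebra 𝕜 A]
    (k : 𝕜) (a : A) : spectralRadius 𝕜 (k • a) = ‖k‖₊ * spectralRadius 𝕜 a := by
  rcases eq_or_ne k 0 with rfl | hk
  · simp [spectrum.spectralRadius_zero]
  · have hσ : spectrum 𝕜 (k • a) = k • spectrum 𝕜 a :=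
      spectrum.unit_smul_eq_smul a (Units.mk0 k hk)
    rw [spectralRadius, spectralRadius, hσ, ← Set.image_smul, iSup_image]
    simp only [nnnorm_smul, ENNReal.coe_mul, ENNReal.mul_iSup]

theorem spectrum.eventually_norm_pow_le_of_spectralRadius_lt {A : Type*} [NormedRing A]
    [NormedAlgebra ℂ A] [CompleteSpace A] (a : A) {r : ℝ≥0} (hr : spectralRadius ℂ a < r) :
    ∀ᶠ i : ℕ in atTop, ‖a ^ i‖ ≤ r ^ i := by
  filter_upwards [(pow_nnnorm_pow_one_div_tendsto_nhds_spectralRadius a).eventually_lt_const hr,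
    eventually_ne_atTop 0] with i hi hi0
  have := (ENNReal.rpow_inv_lt_iff (Nat.cast_pos.2 (Nat.pos_of_ne_zero hi0))).1
    (by simpa [one_div] using hi)
  rw [ENNReal.rpow_natCast] at this
  exact_mod_cast this.le

namespace Matrix

theorem PosSemidef.transpose_mul_mul_same {m n : Type*} [Fintype m] [Fintype n]
    {A : Matrix m m ℝ} (hA : A.PosSemidef) (B : Matrix m n ℝ) : (Bᵀ * A * B).PosSemidef := by
  simpa using hA.conjTranspose_mul_mul_same B

variable {ι : Type*} [Fintype ι] [DecidableEq ι]

section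
open scoped MatrixOrder

theorem PosSemidef.trace_mul_nonneg {A B : Matrix ι ι ℝ} (hA : A.PosSemidef) (hB : B.PosSemidef) :
    0 ≤ (A * B).trace := by
  obtain ⟨C, rfl⟩ := CStarAlgebra.nonneg_iff_eq_star_mul_self.mp hA.nonneg
  rw [star_eq_conjTranspose, Matrix.mul_assoc, trace_mul_comm]
  exact (hB.mul_mul_conjTranspose_same C).trace_nonneg

theorem IsHermitian.posSemidef_sub_iInf_eigenvalues_smul_one [Nonempty ι] {A : Matrix ι ι ℝ}
    (hA : A.IsHermitian) : (A - (⨅ i, hA.eigenvalues i) • (1 : Matrix ι ι ℝ)).PosSemidef := by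
  rw [← le_iff, ← Algebra.algebraMap_eq_smul_one,
    algebraMap_le_iff_le_spectrum (R := ℝ) hA.isSelfAdjoint, hA.spectrum_real_eq_range_eigenvalues]
  rintro _ ⟨i, rfl⟩
  exact ciInf_le (Finite.bddBelow_range _) i

end

theorem map_ofReal_pow (Z : Matrix ι ι ℝ) (i : ℕ) :
    (Z ^ i).map Complex.ofReal = Z.map Complex.ofReal ^ i :=
  map_pow (Complex.ofRealHom.mapMatrix (m := ι)) Z i

theorem PosDef.iInf_eigenvalues_pos [Nonempty ι] {A : Matrix ι ι ℝ} (hA : A.PosDef) :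
    0 < ⨅ i, hA.isHermitian.eigenvalues i := by
  obtain ⟨i, hi⟩ := exists_eq_ciInf_of_finite (f := hA.isHermitian.eigenvalues)
  exact hi ▸ hA.eigenvalues_pos i

theorem mul_trace_le_trace_mul_of_posSemidef_sub {A X : Matrix ι ι ℝ} {c : ℝ}
    (hA : (A - c • 1).PosSemidef) (hX : X.PosSemidef) : c * X.trace ≤ (A * X).trace := by
  have := hA.trace_mul_nonneg hX
  rw [Matrix.sub_mul, trace_sub, smul_mul, Matrix.one_mul, trace_smul, smul_eq_mul] at this
  linarith

section Frobenius
attribute [local instance] frobeniusNormedAddCommGroup frobeniusNormedSpace frobeniusNormedRing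
  frobeniusNormedAlgebra

theorem frobenius_norm_sq_eq_trace {m n : Type*} [Fintype m] [Fintype n] (Z : Matrix m n ℝ) :
    ‖Z‖ ^ 2 = (Z * Zᵀ).trace := by
  rw [frobenius_norm_def, ← Real.sqrt_eq_rpow, Real.sq_sqrt (by positivity),
    ← transpose_transpose Z, ← vec_dotProduct_vec]
  simp [dotProduct, vec, ← Finset.univ_product_univ, Finset.sum_product, sq]

theorem frobenius_norm_map_ofReal {m n : Type*} [Fintype m] [Fintype n] (Z : Matrix m n ℝ) :
    ‖Z.map Complex.ofReal‖ = ‖Z‖ :=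
  frobenius_norm_map_eq Z _ Complex.norm_real

theorem norm_le_frobenius_norm_of_mem_spectrum {𝕜 : Type*} [RCLike 𝕜] {B : Matrix ι ι 𝕜} {μ : 𝕜}
    (hμ : μ ∈ spectrum 𝕜 B) : ‖μ‖ ≤ ‖B‖ := by
  rw [← spectrum_toLin', ← Module.End.hasEigenvalue_iff_mem_spectrum] at hμ
  obtain ⟨v, hv⟩ := hμ.exists_hasEigenvector
  have hBv : B * replicateCol Unit v = μ • replicateCol Unit v := by
    rw [← replicateCol_mulVec, ← replicateCol_smul, ← toLin'_apply, hv.apply_eq_smul]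
  have := frobenius_norm_mul B (replicateCol Unit v)
  rw [hBv, norm_smul] at this
  exact le_of_mul_le_mul_right this (norm_pos_iff.2 ((replicateCol_eq_zero v).not.2 hv.2))

theorem spectralRadius_le_frobenius_nnnorm {𝕜 : Type*} [RCLike 𝕜] (B : Matrix ι ι 𝕜) :
    spectralRadius 𝕜 B ≤ ‖B‖₊ :=
  iSup₂_le fun _ hμ => by exact_mod_cast norm_le_frobenius_norm_of_mem_spectrum hμ

theorem mul_frobenius_norm_sq_le_trace_transpose_mul_mul {k : Type*} [Fintype k]
    {Q : Matrix ι ι ℝ} {c : ℝ} (hQ : (Q - c • 1).PosSemidef) (Y : Matrix ι k ℝ) :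
    c * ‖Y‖ ^ 2 ≤ (Yᵀ * Q * Y).trace := by
  rw [frobenius_norm_sq_eq_trace, Matrix.mul_assoc, trace_mul_comm Yᵀ, Matrix.mul_assoc,
    ← conjTranspose_eq_transpose_of_trivial]
  exact mul_trace_le_trace_mul_of_posSemidef_sub hQ (posSemidef_self_mul_conjTranspose Y)

end Frobenius

end Matrix

section SpecRad

attribute [local instance] frobeniusNormedAddCommGroup frobeniusNormedSpace frobeniusNormedRing
  frobeniusNormedAlgebra

variable {n : ℕ}

theorem specRad_nonneg (Z : Matrix (Fin n) (Fin n) ℝ) : 0 ≤ specRad Z :=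
  ENNReal.toReal_nonneg

theorem ofReal_specRad (Z : Matrix (Fin n) (Fin n) ℝ) :
    ENNReal.ofReal (specRad Z) = spectralRadius ℂ (Z.map Complex.ofReal) :=
  ENNReal.ofReal_toReal <|
    ne_top_of_le_ne_top ENNReal.coe_ne_top (spectralRadius_le_frobenius_nnnorm _)

theorem specRad_smul (c : ℝ) (Z : Matrix (Fin n) (Fin n) ℝ) :
    specRad (c • Z) = |c| * specRad Z := by
  have hmap : (c • Z).map Complex.ofReal = (c : ℂ) • Z.map Complex.ofReal := by
    ext; simp
  rw [specRad, specRad, hmap, spectrum.spectralRadius_smul, ENNReal.toReal_mul]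
  simp

theorem specRad_pow_le_frobenius_norm [Nonempty (Fin n)] (Z : Matrix (Fin n) (Fin n) ℝ) (i : ℕ) :
    specRad Z ^ i ≤ ‖Z ^ i‖ := by
  rw [← frobenius_norm_map_ofReal, map_ofReal_pow, ← coe_nnnorm, ← ENNReal.coe_toReal, specRad,
    ← ENNReal.toReal_pow]
  exact ENNReal.toReal_mono ENNReal.coe_ne_top
    ((spectrum.spectralRadius_pow_le' _ i).trans (spectralRadius_le_frobenius_nnnorm _))

theorem eventually_frobenius_norm_pow_le {Z : Matrix (Fin n) (Fin n) ℝ} {r : ℝ}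
    (hr : specRad Z < r) : ∀ᶠ i : ℕ in atTop, ‖Z ^ i‖ ≤ r ^ i := by
  have hr0 : 0 < r := (specRad_nonneg Z).trans_lt hr
  have hlt : spectralRadius ℂ (Z.map Complex.ofReal) < r.toNNReal := by
    rw [← ofReal_specRad]
    exact (ENNReal.ofReal_lt_ofReal_iff hr0).2 hr
  filter_upwards [spectrum.eventually_norm_pow_le_of_spectralRadius_lt _ hlt] with i hi
  rwa [← map_ofReal_pow, frobenius_norm_map_ofReal, Real.coe_toNNReal r hr0.le] at hi

theorem summable_transpose_pow_mul_mul_pow {Z : Matrix (Fin n) (Fin n) ℝ} (hZ : specRad Z < 1)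
    (Q : Matrix (Fin n) (Fin n) ℝ) : Summable fun i : ℕ => (Z ^ i)ᵀ * Q * Z ^ i := by
  obtain ⟨r, hZr, hr1⟩ := exists_between hZ
  have hr0 : 0 ≤ r := (specRad_nonneg Z).trans hZr.le
  refine Summable.of_norm_bounded_eventually_nat (g := fun i => ‖Q‖ * (r ^ 2) ^ i)
    ((summable_geometric_of_lt_one (by positivity) (by nlinarith)).mul_left ‖Q‖) ?_
  filter_upwards [eventually_frobenius_norm_pow_le hZr] with i hi
  calc ‖(Z ^ i)ᵀ * Q * Z ^ i‖ ≤ ‖Z ^ i‖ * ‖Q‖ * ‖Z ^ i‖ := by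
        grw [frobenius_norm_mul, frobenius_norm_mul, frobenius_norm_transpose]
    _ ≤ r ^ i * ‖Q‖ * r ^ i := by gcongr
    _ = ‖Q‖ * (r ^ 2) ^ i := by ring

theorem mul_specRad_sq_pow_le_trace [Nonempty (Fin n)] {Q : Matrix (Fin n) (Fin n) ℝ} {c : ℝ}
    (hQ : (Q - c • 1).PosSemidef) (hc : 0 ≤ c) (Z : Matrix (Fin n) (Fin n) ℝ) (i : ℕ) :
    c * (specRad Z ^ 2) ^ i ≤ ((Z ^ i)ᵀ * Q * Z ^ i).trace :=
  calc c * (specRad Z ^ 2) ^ i = c * (specRad Z ^ i) ^ 2 := by ring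
    _ ≤ c * ‖Z ^ i‖ ^ 2 := by
      have := specRad_nonneg Z
      gcongr
      exact specRad_pow_le_frobenius_norm Z i
    _ ≤ ((Z ^ i)ᵀ * Q * Z ^ i).trace := mul_frobenius_norm_sq_le_trace_transpose_mul_mul hQ _

theorem mul_mul_specRad_sq_pow_le_trace_mul [Nonempty (Fin n)] {D Q : Matrix (Fin n) (Fin n) ℝ}
    {a b : ℝ} (hD : (D - a • 1).PosSemidef) (ha : 0 ≤ a) (hQ : (Q - b • 1).PosSemidef)
    (hb : 0 ≤ b) (Z : Matrix (Fin n) (Fin n) ℝ) (i : ℕ) :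
    a * b * (specRad Z ^ 2) ^ i ≤ (D * ((Z ^ i)ᵀ * Q * Z ^ i)).trace := by
  have hQ_psd : Q.PosSemidef := by simpa using hQ.add (PosSemidef.one.smul hb)
  calc a * b * (specRad Z ^ 2) ^ i ≤ a * ((Z ^ i)ᵀ * Q * Z ^ i).trace := by
        rw [mul_assoc]
        exact mul_le_mul_of_nonneg_left (mul_specRad_sq_pow_le_trace hQ hb Z i) ha
    _ ≤ (D * ((Z ^ i)ᵀ * Q * Z ^ i)).trace :=
        mul_trace_le_trace_mul_of_posSemidef_sub hD (hQ_psd.transpose_mul_mul_same _)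

end SpecRad

theorem trace_DP_lower_bound_general {n d : ℕ} (hn : 0 < n) (γ : ℝ)
    (hγ0 : 0 < γ)
    (M S D : Matrix (Fin n) (Fin n) ℝ) (R : Matrix (Fin d) (Fin d) ℝ)
    (K : Matrix (Fin d) (Fin n) ℝ)
    (hM : specRad (Real.sqrt γ • M) < 1)
    (hS : S.PosDef) (hR : R.PosDef) (hD : D.PosDef) :
    haveI : Nonempty (Fin n) := ⟨⟨0, hn⟩⟩
    letI Q : Matrix (Fin n) (Fin n) ℝ := S + Kᵀ * R * K
    letI P : Matrix (Fin n) (Fin n) ℝ := ∑' i : ℕ, γ ^ i • ((M ^ i)ᵀ * Q * M ^ i)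
    (⨅ i, hD.isHermitian.eigenvalues i) * (⨅ i, hS.isHermitian.eigenvalues i)
        / (1 - γ * (specRad M) ^ 2)
      ≤ (D * P).trace := by
  have : Nonempty (Fin n) := ⟨⟨0, hn⟩⟩
  set Q := S + Kᵀ * R * K
  set σD := ⨅ i, hD.isHermitian.eigenvalues i
  set σS := ⨅ i, hS.isHermitian.eigenvalues i
  set A := Real.sqrt γ • M
  have hγρ : γ * specRad M ^ 2 = specRad A ^ 2 := by
    rw [specRad_smul, abs_of_nonneg (Real.sqrt_nonneg γ), mul_pow, Real.sq_sqrt hγ0.le]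
  have hseries (i : ℕ) : γ ^ i • ((M ^ i)ᵀ * Q * M ^ i) = (A ^ i)ᵀ * Q * A ^ i := by
    rw [smul_pow, transpose_smul, smul_mul, smul_mul, Matrix.mul_smul, smul_smul, ← mul_pow,
      Real.mul_self_sqrt hγ0.le]
  have hQ : (Q - σS • 1).PosSemidef := by
    rw [add_sub_right_comm]
    exact hS.isHermitian.posSemidef_sub_iInf_eigenvalues_smul_one.add
      (hR.posSemidef.transpose_mul_mul_same K)
  have hterm := mul_mul_specRad_sq_pow_le_trace_mul
    hD.isHermitian.posSemidef_sub_iInf_eigenvalues_smul_one hD.iInf_eigenvalues_pos.le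
    hQ hS.iInf_eigenvalues_pos.le A
  have hρ : specRad A ^ 2 < 1 := pow_lt_one₀ (specRad_nonneg A) hM two_ne_zero
  have htrace := ((summable_transpose_pow_mul_mul_pow hM Q).hasSum.mul_left D).map
    (traceAddMonoidHom (Fin n) ℝ) continuous_id.matrix_trace
  rw [tsum_congr hseries, div_eq_mul_inv, hγρ]
  exact hasSum_le hterm ((hasSum_geometric_of_lt_one (sq_nonneg _) hρ).mul_left _) htrace

/-- In the LQR setting with `Q = S + KᵀRK`, `P = ∑ γⁱ(Mⁱ)ᵀQMⁱ` and `D` positive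
definite: `Tr(DP) ≥ σ_min(D) σ_min(S) / (1 − γ ρ(M)²)`. -/
theorem trace_DP_lower_bound {n d : ℕ} (hn : 0 < n) (γ : ℝ)
    (hγ0 : 0 < γ) (hγ1 : γ < 1)
    (M S D : Matrix (Fin n) (Fin n) ℝ) (R : Matrix (Fin d) (Fin d) ℝ)
    (K : Matrix (Fin d) (Fin n) ℝ)
    (hM : specRad (Real.sqrt γ • M) < 1)
    (hS : S.PosDef) (hR : R.PosDef) (hD : D.PosDef) :
    haveI : Nonempty (Fin n) := ⟨⟨0, hn⟩⟩
    letI Q : Matrix (Fin n) (Fin n) ℝ := S + Kᵀ * R * K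
    letI P : Matrix (Fin n) (Fin n) ℝ := ∑' i : ℕ, γ ^ i • ((M ^ i)ᵀ * Q * M ^ i)
    (⨅ i, hD.isHermitian.eigenvalues i) * (⨅ i, hS.isHermitian.eigenvalues i)
        / (1 - γ * (specRad M) ^ 2)
      ≤ (D * P).trace :=
  trace_DP_lower_bound_general hn γ hγ0 M S D R K hM hS hR hD
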